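/- With V(L(n)) and H(L(n)) as above and 0 < d < 1/2, let P be any convex set with V(L(n)) ⊆ P ⊆ H(L(n)). Then for each a ∈ {0,1}^n, the supremum z_p of φ(a)^T x + d·w over (x,w) ∈ P satisfies: z_p = a^T 1 + d if a ∈ L(n), and z_p ≤ a^T 1 + d with z_p ≥ a^T 1 if a ∉ L(n); moreover when a ∈ L(n) the value a^T 1 + d is attained. Hence membership of a in L(n) is decided by whether the maximum over P equals a^T 1 + d (when a∈L) versus being at most a^T 1 from below on V (noting z_v = a^T 1 when a∉L). -/

import Mathlib

open scoped Classical
open scoped Classical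

/-- 0/1 real vector corresponding to a boolean vector. -/
def bvec {n : ℕ} (x : Fin n → Bool) : Fin n → ℝ := fun j => if x j then 1 else 0

/-- ±1 vector `φ(x) = 2x − 1`. -/
def pmvec {n : ℕ} (x : Fin n → Bool) : Fin n → ℝ := fun j => if x j then 1 else -1

/-- Inner polytope `V(L(n)) = conv{(x, ψ(x)) : x ∈ {0,1}ⁿ}`. -/
noncomputable def Vpoly (n : ℕ) (L : Set (Fin n → Bool)) : Set ((Fin n → ℝ) × ℝ) :=
  convexHull ℝ {p | ∃ b : Fin n → Bool, p = (bvec b, if b ∈ L then (1 : ℝ) else 0)}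

/-- Outer polytope `H(L(n))`. -/
noncomputable def Hpoly (n : ℕ) (L : Set (Fin n → Bool)) (d : ℝ) : Set ((Fin n → ℝ) × ℝ) :=
  {p | ∀ a : Fin n → Bool,
    (∑ i, pmvec a i * p.1 i) + d * p.2 ≤ (∑ i, bvec a i) + (if a ∈ L then d else 0)}

/-! The vertex `(a, ψ(a))` of `V(L(n))` lies in `P` and attains the right-hand side of the facet
inequality of `H(L(n))` indexed by `a`; that right-hand side is at most `a^T 1 + d` since `d ≥ 0`. -/

theorem sum_pmvec_mul_bvec_self {n : ℕ} (a : Fin n → Bool) :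
    ∑ i, pmvec a i * bvec a i = ∑ i, bvec a i := by
  refine Finset.sum_congr rfl fun i _ => ?_
  by_cases h : a i <;> simp [pmvec, bvec, h]

theorem vertex_mem_Vpoly {n : ℕ} (L : Set (Fin n → Bool)) (b : Fin n → Bool) :
    (bvec b, if b ∈ L then (1 : ℝ) else 0) ∈ Vpoly n L :=
  subset_convexHull ℝ _ ⟨b, rfl⟩

theorem objective_vertex {n : ℕ} (L : Set (Fin n → Bool)) (d : ℝ) (a : Fin n → Bool) :
    (∑ i, pmvec a i * bvec a i) + d * (if a ∈ L then (1 : ℝ) else 0) =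
      (∑ i, bvec a i) + (if a ∈ L then d else 0) := by
  rw [sum_pmvec_mul_bvec_self]
  split_ifs <;> ring

theorem objective_le_of_mem_Hpoly {n : ℕ} {L : Set (Fin n → Bool)} {d : ℝ} (hd : 0 ≤ d)
    {p : (Fin n → ℝ) × ℝ} (hp : p ∈ Hpoly n L d) (a : Fin n → Bool) :
    (∑ i, pmvec a i * p.1 i) + d * p.2 ≤ (∑ i, bvec a i) + d := by
  have hfacet := hp a
  split_ifs at hfacet <;> linarith

theorem sandwich_decides_membership_general
    (n : ℕ) (L : Set (Fin n → Bool)) (d : ℝ) (hd0 : 0 < d)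
    (P : Set ((Fin n → ℝ) × ℝ))
    (hVP : Vpoly n L ⊆ P) (hPH : P ⊆ Hpoly n L d) (a : Fin n → Bool) :
    (a ∈ L →
      (∃ p ∈ P, (∑ i, pmvec a i * p.1 i) + d * p.2 = (∑ i, bvec a i) + d) ∧
      ∀ p ∈ P, (∑ i, pmvec a i * p.1 i) + d * p.2 ≤ (∑ i, bvec a i) + d) ∧
    (a ∉ L →
      (∀ p ∈ P, (∑ i, pmvec a i * p.1 i) + d * p.2 ≤ (∑ i, bvec a i) + d) ∧
      (∃ p ∈ P, (∑ i, bvec a i) ≤ (∑ i, pmvec a i * p.1 i) + d * p.2)) := by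
  have hvertex := hVP (vertex_mem_Vpoly L a)
  have hvalue := objective_vertex L d a
  have hbound : ∀ p ∈ P, (∑ i, pmvec a i * p.1 i) + d * p.2 ≤ (∑ i, bvec a i) + d :=
    fun p hp => objective_le_of_mem_Hpoly hd0.le (hPH hp) a
  refine ⟨fun ha => ⟨⟨_, hvertex, ?_⟩, hbound⟩, fun ha => ⟨hbound, ⟨_, hvertex, ?_⟩⟩⟩
  · simpa only [if_pos ha] using hvalue
  · simp only [if_neg ha] at hvalue ⊢
    linarith

theorem sandwich_decides_membership
    (n : ℕ) (L : Set (Fin n → Bool)) (d : ℝ) (hd0 : 0 < d) (hd1 : d < 1 / 2)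
    (P : Set ((Fin n → ℝ) × ℝ))
    (hVP : Vpoly n L ⊆ P) (hPH : P ⊆ Hpoly n L d) (a : Fin n → Bool) :
    (a ∈ L →
      (∃ p ∈ P, (∑ i, pmvec a i * p.1 i) + d * p.2 = (∑ i, bvec a i) + d) ∧
      ∀ p ∈ P, (∑ i, pmvec a i * p.1 i) + d * p.2 ≤ (∑ i, bvec a i) + d) ∧
    (a ∉ L →
      (∀ p ∈ P, (∑ i, pmvec a i * p.1 i) + d * p.2 ≤ (∑ i, bvec a i) + d) ∧
      (∃ p ∈ P, (∑ i, bvec a i) ≤ (∑ i, pmvec a i * p.1 i) + d * p.2)) :=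
  sandwich_decides_membership_general n L d hd0 P hVP hPH a
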